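/- Let V: ℝ → [0,∞) satisfy V(x) ≥ (|x - x_j|/k)^p on each ball B(x_j, kγ^{1/p}) (j = 1,…,n), and suppose {x : V(x) < γ} is contained in the union of these balls. Then ∫_ℝ [γ - V(x)]₊² dx ≤ n k ω₁ γ^{2 + 1/p}, where [·]₊ denotes the positive part and ω₁ is a dimensional constant. -/

import Mathlib

open MeasureTheory

/-!
On the ball of radius `kγ^{1/p}` around each `xⱼ` the integrand `[γ - V]₊²` is at most `γ²`, and
outside these balls it vanishes, so the integral is at most `γ²` times the total length
`2nkγ^{1/p}` of the balls; this is the claimed bound since `ω₁ = 2`.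
-/

theorem volume_real_iUnion_ball_le {ι : Type*} [Fintype ι] (c : ι → ℝ) {r : ℝ} (hr : 0 ≤ r) :
    volume.real (⋃ i, Metric.ball (c i) r) ≤ Fintype.card ι * (2 * r) :=
  calc volume.real (⋃ i, Metric.ball (c i) r)
      ≤ ∑ i, volume.real (Metric.ball (c i) r) := measureReal_iUnion_fintype_le _
    _ = Fintype.card ι * (2 * r) := by simp [Real.volume_real_ball hr]

theorem volume_iUnion_ball_ne_top {ι : Type*} [Finite ι] (c : ι → ℝ) (r : ℝ) :
    volume (⋃ i, Metric.ball (c i) r) ≠ ⊤ :=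
  (Bornology.isBounded_iUnion.2 fun _ ↦ Metric.isBounded_ball).measure_lt_top.ne

-- `f` need not be integrable: otherwise its Bochner integral is `0`.
theorem integral_le_measureReal_mul_of_le_indicator {α : Type*} [MeasurableSpace α]
    {μ : Measure α} {f : α → ℝ} {s : Set α} {c : ℝ} (hs : MeasurableSet s) (hμs : μ s ≠ ⊤)
    (hf0 : 0 ≤ f) (hfs : f ≤ s.indicator fun _ ↦ c) :
    ∫ x, f x ∂μ ≤ μ.real s * c := by
  have hint : Integrable (s.indicator fun _ ↦ c) μ :=
    (integrable_indicator_iff hs).2 (integrableOn_const hμs)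
  calc ∫ x, f x ∂μ ≤ ∫ x, s.indicator (fun _ ↦ c) x ∂μ :=
        integral_mono_of_nonneg (ae_of_all _ hf0) hint (ae_of_all _ hfs)
    _ = μ.real s * c := by rw [integral_indicator_const _ hs, smul_eq_mul]

theorem sq_max_sub_le_indicator {α : Type*} {V : α → ℝ} (hV0 : 0 ≤ V) {γ : ℝ} (hγ : 0 ≤ γ) :
    (fun x ↦ max (γ - V x) 0 ^ 2) ≤ {x | V x < γ}.indicator fun _ ↦ γ ^ 2 := by
  intro x
  dsimp only
  by_cases hx : x ∈ {x | V x < γ}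
  · rw [Set.indicator_of_mem hx]
    gcongr
    exact max_le (sub_le_self _ (hV0 x)) hγ
  · rw [Set.indicator_of_notMem hx, max_eq_right (by simp_all), sq, mul_zero]

theorem stmt6_general (V : ℝ → ℝ) (hV0 : ∀ x, 0 ≤ V x)
    (n : ℕ) (xj : Fin n → ℝ) (p k γ ω1 : ℝ)
    (hk : 0 < k) (hγ : 0 < γ)
    (hω1 : ω1 = (volume (Metric.ball (0 : ℝ) 1)).toReal)
    (hsub : {x : ℝ | V x < γ} ⊆ ⋃ j : Fin n, Metric.ball (xj j) (k * γ ^ (1 / p))) :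
    (∫ x : ℝ, (max (γ - V x) 0) ^ 2) ≤ (n : ℝ) * k * ω1 * γ ^ (2 + 1 / p) := by
  have hr : 0 ≤ k * γ ^ (1 / p) := by positivity
  have hω1_eq : ω1 = 2 := by rw [hω1, Real.volume_ball]; norm_num
  have hle_balls := (sq_max_sub_le_indicator hV0 hγ.le).trans
    (Set.indicator_le_indicator_of_subset hsub fun _ ↦ sq_nonneg γ)
  calc (∫ x : ℝ, (max (γ - V x) 0) ^ 2)
      ≤ volume.real (⋃ j, Metric.ball (xj j) (k * γ ^ (1 / p))) * γ ^ 2 :=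
        integral_le_measureReal_mul_of_le_indicator
          (MeasurableSet.iUnion fun _ ↦ measurableSet_ball) (volume_iUnion_ball_ne_top _ _)
          (fun _ ↦ sq_nonneg _) hle_balls
    _ ≤ n * (2 * (k * γ ^ (1 / p))) * γ ^ 2 := by
        gcongr
        simpa using volume_real_iUnion_ball_le xj hr
    _ = (n : ℝ) * k * ω1 * γ ^ (2 + 1 / p) := by
        rw [hω1_eq, Real.rpow_add hγ, Real.rpow_two]; ring

/-- If `V ≥ (|x-xⱼ|/k)^p` on each ball `B(xⱼ, kγ^{1/p})` and `{V < γ}` is contained in the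
union of these balls, then `∫ [γ - V]₊² ≤ n k ω₁ γ^{2+1/p}`, where `ω₁` is the volume of
the unit ball in `ℝ`. -/
theorem stmt6 (V : ℝ → ℝ) (hVmeas : Measurable V) (hV0 : ∀ x, 0 ≤ V x)
    (n : ℕ) (xj : Fin n → ℝ) (p k γ ω1 : ℝ)
    (hp : 0 < p) (hk : 0 < k) (hγ : 0 < γ)
    (hω1 : ω1 = (volume (Metric.ball (0 : ℝ) 1)).toReal)
    (hlow : ∀ j : Fin n, ∀ x ∈ Metric.ball (xj j) (k * γ ^ (1 / p)),
      (|x - xj j| / k) ^ p ≤ V x)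
    (hsub : {x : ℝ | V x < γ} ⊆ ⋃ j : Fin n, Metric.ball (xj j) (k * γ ^ (1 / p))) :
    (∫ x : ℝ, (max (γ - V x) 0) ^ 2) ≤ (n : ℝ) * k * ω1 * γ ^ (2 + 1 / p) :=
  stmt6_general V hV0 n xj p k γ ω1 hk hγ hω1 hsub
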